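/- Let W ∈ ℝ^{2×2} satisfy det(W) > 0 and ℓ(W) < 1/2, where ℓ is the 2×2 matrix-completion loss. Then the unobserved entry satisfies |W₁₁| > (1 − √(2·ℓ(W)))² / √(2·ℓ(W)) = 1/√(2·ℓ(W)) − 2 + √(2·ℓ(W)). -/
import Mathlib


open Matrix

/-- The matrix-completion loss `ℓ(W) = ½[(W₁₂−1)² + (W₂₁−1)² + W₂₂²]`
(indices `0`-based: `W₁₂ = W 0 1`, `W₂₁ = W 1 0`, `W₂₂ = W 1 1`). -/
noncomputable def mcLoss (W : Matrix (Fin 2) (Fin 2) ℝ) : ℝ :=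
  (1 / 2) * ((W 0 1 - 1) ^ 2 + (W 1 0 - 1) ^ 2 + W 1 1 ^ 2)

/-- **Lower bound on the unobserved entry.**  If `det W > 0` and `ℓ(W) < 1/2`, then
`|W₁₁| > (1 − √(2ℓ(W)))² / √(2ℓ(W)) = 1/√(2ℓ(W)) − 2 + √(2ℓ(W))`. -/
theorem unobserved_entry_lower_bound (W : Matrix (Fin 2) (Fin 2) ℝ)
    (hdet : 0 < W.det) (hloss : mcLoss W < 1 / 2) :
    (1 - Real.sqrt (2 * mcLoss W)) ^ 2 / Real.sqrt (2 * mcLoss W) < |W 0 0| ∧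
    (1 - Real.sqrt (2 * mcLoss W)) ^ 2 / Real.sqrt (2 * mcLoss W) =
      1 / Real.sqrt (2 * mcLoss W) - 2 + Real.sqrt (2 * mcLoss W) := by
  have hdet2 : 0 < W 0 0 * W 1 1 - W 0 1 * W 1 0 := by
    rw [Matrix.det_fin_two] at hdet; exact hdet
  have hL : 2 * mcLoss W = (W 0 1 - 1) ^ 2 + (W 1 0 - 1) ^ 2 + W 1 1 ^ 2 := by
    unfold mcLoss; ring
  have h2L0 : 0 ≤ 2 * mcLoss W := by rw [hL]; positivity
  set s := Real.sqrt (2 * mcLoss W) with hs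
  have hs2 : s ^ 2 = 2 * mcLoss W := Real.sq_sqrt h2L0
  have hLpos : 0 < 2 * mcLoss W := by
    rcases lt_or_eq_of_le h2L0 with h | h
    · exact h
    · exfalso
      have hc2 : W 1 1 ^ 2 = 0 := by nlinarith [sq_nonneg (W 0 1 - 1), sq_nonneg (W 1 0 - 1)]
      have hc : W 1 1 = 0 := sq_eq_zero_iff.mp hc2
      have ha2 : (W 0 1 - 1) ^ 2 = 0 := by nlinarith [sq_nonneg (W 1 0 - 1)]
      have hb2 : (W 1 0 - 1) ^ 2 = 0 := by nlinarith [sq_nonneg (W 0 1 - 1)]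
      have ha1 := sq_eq_zero_iff.mp ha2
      have hb1 := sq_eq_zero_iff.mp hb2
      have e1 : W 0 1 = 1 := by linarith
      have e2 : W 1 0 = 1 := by linarith
      rw [hc, e1, e2] at hdet2
      norm_num at hdet2
  have spos : 0 < s := Real.sqrt_pos.mpr hLpos
  have hs1 : s < 1 := by nlinarith
  have ha : 1 - s ≤ W 0 1 := by nlinarith [sq_nonneg (W 1 0 - 1), sq_nonneg (W 1 1)]
  have hb : 1 - s ≤ W 1 0 := by nlinarith [sq_nonneg (W 0 1 - 1), sq_nonneg (W 1 1)]
  have hc : |W 1 1| ≤ s := by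
    rw [← Real.sqrt_sq_eq_abs]
    apply Real.sqrt_le_sqrt
    nlinarith [sq_nonneg (W 0 1 - 1), sq_nonneg (W 1 0 - 1)]
  have h1 : W 0 0 * W 1 1 ≤ |W 0 0| * |W 1 1| := by
    rw [← abs_mul]; exact le_abs_self _
  constructor
  · rw [div_lt_iff₀ spos]
    have h2 : |W 0 0| * |W 1 1| ≤ |W 0 0| * s :=
      mul_le_mul_of_nonneg_left hc (abs_nonneg _)
    have h3 : (1 - s) * (1 - s) ≤ W 0 1 * W 1 0 :=
      mul_le_mul ha hb (by linarith) (by linarith)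
    nlinarith
  · field_simp
    ring
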